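/- Let m be a monad on c ⥤ Type whose underlying endofunctor is familial with positions m(1) and arities m[M], and suppose the unit η of m is cartesian (every naturality square of η is a pullback). For each object C of c, let η(C) ∈ m(1)(C) be the element picked out by the unit component at the terminal copresheaf (the image under η_⊤(C) : ⊤(C) → m(⊤)(C) ≅ m(1)(C) of the unique element). Then the arity m[η(C)] is isomorphic, as a c-copresheaf, to the representable copresheaf c(C, −). Moreover, every component of η is a monomorphism, and consequently the free algebra functor c-Set ⥤ m-Alg is faithful. -/

import Mathlib

/-!
The cartesian naturality square of `η` at `X ⟶ ⊤`, evaluated at an object `C`, exhibits `X(C)` as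
the fibre of `m(X)(C) → m(⊤)(C) ≅ m(1)(C)` over `η(C)`. By familiality that fibre is `Hom(m[η(C)], X)`,
naturally in `X`, so `m[η(C)]` corepresents evaluation at `C`, as does `c(C, −)` by Yoneda.
The same square makes every `η_X` mono, since the legs of a pullback are jointly monic and one of
them lands in the terminal object; a monad with monic unit is faithful, hence so is its
free-algebra functor.
-/
namespace Fam
open CategoryTheory Opposite Limits
private lemma sigmaExt {α : Type} {β : α → Type} {a a' : α} {b : β a} {b' : β a'}
    (h : a = a') (h' : HEq b b') : (⟨a, b⟩ : Σ x, β x) = ⟨a', b'⟩ := by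
  subst h; cases h'; rfl
variable {c d : Type} [SmallCategory c] [SmallCategory d]
def elHom (pos : c ⥤ Type) {C C' : c} (f : C ⟶ C') (I : pos.obj C) :
    pos.elementsMk C I ⟶ pos.elementsMk C' (pos.map f I) :=
  CategoryOfElements.homMk _ _ f rfl
lemma eqToHom_val {pos : c ⥤ Type} {x y : pos.Elements} (E : x = y) :
    (eqToHom E).val = eqToHom (congrArg Sigma.fst E) := by
  subst E; simp
@[simps]
def famApply (pos : c ⥤ Type) (ar : pos.Elementsᵒᵖ ⥤ d ⥤ Type) :
    (d ⥤ Type) ⥤ c ⥤ Type where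
  obj X :=
    { obj := fun C => Σ I : pos.obj C, ar.obj (op (pos.elementsMk C I)) ⟶ X
      map := fun {C C'} f => TypeCat.ofHom fun x => ⟨pos.map f x.1, ar.map (elHom pos f x.1).op ≫ x.2⟩
      map_id := by
        intro C
        ext x : 3
        obtain ⟨I, g⟩ := x
        have h : pos.map (𝟙 C) I = I := by simp
        have hE : pos.elementsMk C I = pos.elementsMk C (pos.map (𝟙 C) I) := by rw [h]
        have he : elHom pos (𝟙 C) I = eqToHom hE := by
          apply CategoryOfElements.ext
          rw [eqToHom_val]
          simp [elHom]
        dsimp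
        refine sigmaExt h ?_
        rw [he]
        simp [eqToHom_op, eqToHom_map]
      map_comp := by
        intro C C' C'' f g
        ext x : 3
        obtain ⟨I, u⟩ := x
        have h : pos.map (f ≫ g) I = pos.map g (pos.map f I) := by simp
        have hE : pos.elementsMk C'' (pos.map (f ≫ g) I)
            = pos.elementsMk C'' (pos.map g (pos.map f I)) := by rw [h]
        have hcomp : elHom pos f I ≫ elHom pos g (pos.map f I)
            = elHom pos (f ≫ g) I ≫ eqToHom hE := by
          apply CategoryOfElements.ext
          rw [CategoryOfElements.comp_val, CategoryOfElements.comp_val, eqToHom_val]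
          simp [elHom]
        dsimp
        refine sigmaExt h ?_
        rw [← Category.assoc, ← ar.map_comp, ← op_comp, hcomp, op_comp, ar.map_comp,
          Category.assoc]
        simp [eqToHom_op, eqToHom_map] }
  map {X Y} t :=
    { app := fun C => TypeCat.ofHom fun x => ⟨x.1, x.2 ≫ t⟩
      naturality := by
        intro C C' f
        ext x : 3
        dsimp
        rw [Category.assoc] }
  map_id := by
    intro X
    apply NatTrans.ext
    ext C x : 4
    dsimp
    rw [Category.comp_id]
  map_comp := by
    intro X Y Z s t
    apply NatTrans.ext
    ext C x : 4
    dsimp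
    rw [Category.assoc]

/-- The unit exhibiting `famApply pos (ar ⋙ G)` as the right coclosure `⌈F/G⌉`,
i.e. the left Kan extension of the familial functor `F = famApply pos ar` along `G`. -/
def coclosureUnit {e : Type} [SmallCategory e] (pos : c ⥤ Type)
    (ar : pos.Elementsᵒᵖ ⥤ e ⥤ Type) (G : (e ⥤ Type) ⥤ d ⥤ Type) :
    famApply pos ar ⟶ G ⋙ famApply pos (ar ⋙ G) where
  app X :=
    { app := fun C => TypeCat.ofHom fun x => ⟨x.1, G.map x.2⟩
      naturality := by
        intro C C' f
        ext x : 3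
        show (⟨pos.map f x.1, G.map (ar.map (elHom pos f x.1).op ≫ x.2)⟩ :
            Σ I : pos.obj C', (ar ⋙ G).obj (op (pos.elementsMk C' I)) ⟶ G.obj X)
          = ⟨pos.map f x.1, G.map (ar.map (elHom pos f x.1).op) ≫ G.map x.2⟩
        rw [G.map_comp] }
  naturality := by
    intro X Y t
    apply NatTrans.ext
    ext C x
    show (⟨x.1, G.map (x.2 ≫ t)⟩ :
        Σ I : pos.obj C, (ar ⋙ G).obj (op (pos.elementsMk C I)) ⟶ G.obj Y)
      = ⟨x.1, G.map x.2 ≫ G.map t⟩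
    rw [G.map_comp]

section Statement12

variable {c : Type} [SmallCategory c]
  (m : Monad (c ⥤ Type)) {posm : c ⥤ Type} (arm : posm.Elementsᵒᵖ ⥤ c ⥤ Type)

/-- The terminal copresheaf on `c`. -/
def termPSh : c ⥤ Type := (Functor.const c).obj PUnit

variable (em : famApply posm arm ≅ (m : (c ⥤ Type) ⥤ c ⥤ Type))

/-- The unit operation `η(C) ∈ m(1)(C)`: the image of the unique element under the unit
component of `m` at the terminal copresheaf (using `m(⊤) ≅ m(1)`). -/
def unitOp (C : c) : posm.obj C :=
  ((em.inv.app (termPSh)).app C ((m.η.app (termPSh)).app C PUnit.unit)).1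

section CartesianUnit

variable {𝒞 : Type*} [Category 𝒞]

lemma mono_snd_of_isPullback_of_isTerminal {P X Y Z : 𝒞} {fst : P ⟶ X} {snd : P ⟶ Y}
    {f : X ⟶ Z} {g : Y ⟶ Z} (h : IsPullback fst snd f g) (hX : IsTerminal X) : Mono snd :=
  ⟨fun _ _ hab => h.hom_ext (hX.hom_ext _ _) hab⟩

lemma faithful_of_mono_app {F : 𝒞 ⥤ 𝒞} (η : 𝟭 𝒞 ⟶ F) (hη : ∀ X, Mono (η.app X)) :
    F.Faithful where
  map_injective {X Y f g} hfg := by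
    have := hη Y
    rw [← cancel_mono (η.app Y), ← Functor.id_map f, ← Functor.id_map g, η.naturality,
      η.naturality, hfg]

lemma free_faithful_of_mono_unit (T : Monad 𝒞) (hη : ∀ X, Mono (T.η.app X)) :
    T.free.Faithful :=
  have : (T.free ⋙ T.forget).Faithful := faithful_of_mono_app T.η hη
  Functor.Faithful.of_comp T.free T.forget

end CartesianUnit

def isTerminalTermPSh : IsTerminal (termPSh : c ⥤ Type) :=
  Functor.isTerminalConst c Types.isTerminalPUnit

section Position

variable {F : (d ⥤ Type) ⥤ c ⥤ Type} {pos : c ⥤ Type} {ar : pos.Elementsᵒᵖ ⥤ d ⥤ Type}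
  (e : famApply pos ar ≅ F)

def position {X : d ⥤ Type} {C : c} (z : (F.obj X).obj C) : pos.obj C :=
  ((e.inv.app X).app C z).1

lemma position_map {X Y : d ⥤ Type} (t : X ⟶ Y) {C : c} (z : (F.obj X).obj C) :
    position e ((F.map t).app C z) = position e z :=
  congrArg Sigma.fst (types_congr_hom (NatTrans.congr_app (e.inv.naturality t) C) z)

lemma position_injective_of_isTerminal {T : d ⥤ Type} (hT : IsTerminal T) (C : c) :
    Function.Injective (position e (X := T) (C := C)) := by
  intro z z' h
  apply ((e.app T).app C).toEquiv.symm.injective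
  have (I : pos.obj C) : Subsingleton (ar.obj (op (pos.elementsMk C I)) ⟶ T) := ⟨hT.hom_ext⟩
  exact Sigma.ext h
    (Subsingleton.helim (congrArg (fun I => ar.obj (op (pos.elementsMk C I)) ⟶ T) h) _ _)

def positionFiberEquiv (X : d ⥤ Type) (C : c) (I : pos.obj C) :
    {z : (F.obj X).obj C // position e z = I} ≃ (ar.obj (op (pos.elementsMk C I)) ⟶ X) :=
  (((e.app X).app C).toEquiv.symm.subtypeEquiv fun _ => Iff.rfl).trans (Equiv.sigmaSubtype I)

end Position

section CartesianFamilial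

variable {F : (c ⥤ Type) ⥤ c ⥤ Type} {η : 𝟭 (c ⥤ Type) ⟶ F}

lemma mono_app_of_equifibered
    (hη : NatTrans.Equifibered η) (X : c ⥤ Type) : Mono (η.app X) :=
  mono_snd_of_isPullback_of_isTerminal (hη (isTerminalTermPSh.from X)) isTerminalTermPSh

lemma app_app_injective_of_equifibered
    (hη : NatTrans.Equifibered η)
    (X : c ⥤ Type) (C : c) : Function.Injective ((η.app X).app C) := by
  have := mono_app_of_equifibered hη X
  exact (mono_iff_injective _).1 inferInstance

lemma exists_app_app_eq_of_equifibered
    (hη : NatTrans.Equifibered η)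
    {X : c ⥤ Type} {C : c} (z : (F.obj X).obj C)
    (hz : (F.map (isTerminalTermPSh.from X)).app C z = (η.app termPSh).app C PUnit.unit) :
    ∃ x, (η.app X).app C x = z :=
  let ⟨x, _, hx⟩ := Types.exists_of_isPullback
    ((hη (isTerminalTermPSh.from X)).map ((evaluation c Type).obj C)) PUnit.unit z hz.symm
  ⟨x, hx⟩

variable {pos : c ⥤ Type} {ar : pos.Elementsᵒᵖ ⥤ c ⥤ Type} (e : famApply pos ar ≅ F)

lemma position_app_app (X : c ⥤ Type) {C : c} (x : X.obj C) :
    position e ((η.app X).app C x) = position e ((η.app termPSh).app C PUnit.unit) := by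
  rw [← position_map e (isTerminalTermPSh.from X)]
  exact congrArg (position e) (types_congr_hom (NatTrans.congr_app (η.naturality _) C) x).symm

lemma map_from_eq_of_position_eq {X : c ⥤ Type} {C : c} {z : (F.obj X).obj C}
    (hz : position e z = position e ((η.app termPSh).app C PUnit.unit)) :
    (F.map (isTerminalTermPSh.from X)).app C z = (η.app termPSh).app C PUnit.unit :=
  position_injective_of_isTerminal e isTerminalTermPSh C (by rw [position_map, hz])

noncomputable def unitFiberEquiv
    (hη : NatTrans.Equifibered η)
    (X : c ⥤ Type) (C : c) :
    X.obj C ≃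
      {z : (F.obj X).obj C // position e z = position e ((η.app termPSh).app C PUnit.unit)} :=
  Equiv.ofBijective (fun x => ⟨(η.app X).app C x, position_app_app e X x⟩)
    ⟨fun _ _ h => app_app_injective_of_equifibered hη X C (congrArg Subtype.val h),
      fun ⟨z, hz⟩ =>
        let ⟨x, hx⟩ := exists_app_app_eq_of_equifibered hη z (map_from_eq_of_position_eq e hz)
        ⟨x, Subtype.ext hx⟩⟩

noncomputable def arityHomEquiv
    (hη : NatTrans.Equifibered η)
    (X : c ⥤ Type) (C : c) :
    (ar.obj (op (pos.elementsMk C (position e ((η.app termPSh).app C PUnit.unit)))) ⟶ X) ≃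
      X.obj C :=
  ((unitFiberEquiv e hη X C).trans (positionFiberEquiv e X C _)).symm

lemma app_app_arityHomEquiv
    (hη : NatTrans.Equifibered η)
    {X : c ⥤ Type} {C : c}
    (g : ar.obj (op (pos.elementsMk C (position e ((η.app termPSh).app C PUnit.unit)))) ⟶ X) :
    (η.app X).app C (arityHomEquiv e hη X C g) = (e.hom.app X).app C ⟨_, g⟩ :=
  congrArg Subtype.val
    ((unitFiberEquiv e hη X C).apply_symm_apply ((positionFiberEquiv e X C _).symm g))

noncomputable def corepresentableByArityOfUnit
    (hη : NatTrans.Equifibered η)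
    (C : c) :
    ((evaluation c Type).obj C).CorepresentableBy
      (ar.obj (op (pos.elementsMk C (position e ((η.app termPSh).app C PUnit.unit))))) where
  homEquiv {X} := arityHomEquiv e hη X C
  homEquiv_comp {X Y} t g := by
    apply app_app_injective_of_equifibered hη Y C
    calc (η.app Y).app C (arityHomEquiv e hη Y C (g ≫ t))
        = (e.hom.app Y).app C ⟨_, g ≫ t⟩ := app_app_arityHomEquiv e hη _
      _ = (F.map t).app C ((e.hom.app X).app C ⟨_, g⟩) :=
          types_congr_hom (NatTrans.congr_app (e.hom.naturality t) C)
            (⟨_, g⟩ : ((famApply pos ar).obj X).obj C)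
      _ = (F.map t).app C ((η.app X).app C (arityHomEquiv e hη X C g)) := by
          rw [app_app_arityHomEquiv]
      _ = (η.app Y).app C (t.app C (arityHomEquiv e hη X C g)) :=
          (types_congr_hom (NatTrans.congr_app (η.naturality t) C) _).symm

end CartesianFamilial

def evaluationCorepresentableBy (C : c) :
    ((evaluation c Type).obj C).CorepresentableBy (coyoneda.obj (op C)) where
  homEquiv := coyonedaEquiv
  homEquiv_comp g f := coyonedaEquiv_comp f g

/-- If `m` is a familial monad on `c ⥤ Type` whose unit is cartesian,
then the arity `m[η(C)]` of the unit operation at `C` is isomorphic to the representable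
copresheaf `c(C, −)`; moreover every component of the unit is a monomorphism, and hence the
free algebra functor `c-Set ⥤ m-Alg` is faithful. -/
theorem unit_arity_representable_of_cartesian_unit
    (hUnitCartesian : ∀ {X Y : c ⥤ Type} (f : X ⟶ Y),
      IsPullback f (m.η.app X) (m.η.app Y) ((m : (c ⥤ Type) ⥤ c ⥤ Type).map f)) :
    (∀ C : c,
      Nonempty (arm.obj (op (posm.elementsMk C (unitOp m arm em C))) ≅
        coyoneda.obj (op C))) ∧
    (∀ X : c ⥤ Type, Mono (m.η.app X)) ∧
    m.free.Faithful :=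
  have hη : NatTrans.Equifibered m.η := fun _ _ f => hUnitCartesian f
  have hmono := mono_app_of_equifibered hη
  ⟨fun C => ⟨(corepresentableByArityOfUnit em hη C).uniqueUpToIso
      (evaluationCorepresentableBy C)⟩,
    hmono, free_faithful_of_mono_unit m hmono⟩

end Statement12

end Fam
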